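/- arXiv:1908.05110 — 4 statements merged into one kernel-verified Lean document; each statement's English description precedes it below -/
import Mathlib

section
/- Set M₀ = ℚ·β (the line spanned by β) and M₂ = β^⊥ = { x ∈ V : ⟨x,β⟩ = 0 }. Then: (i) M₀ ⊆ M₂ and M₂ ≠ V; (ii) N_{β,ρ}(V) ⊆ M₂; (iii) N_{β,ρ}(M₂) ⊆ M₀; (iv) N_{β,ρ}(M₀) = 0; and (v) N_{β,ρ}² induces a linear isomorphism from the quotient V/M₂ onto M₀. (That is, the filtration 0 ⊆ M₀ ⊆ M₂ ⊆ V is the monodromy weight filtration of N_{β,ρ} centered at weight 2.) -/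
/-- With `M₀ = ℚ·β` and `M₂ = β^⊥`, the filtration `0 ⊆ M₀ ⊆ M₂ ⊆ V` is the monodromy
weight filtration of `N` centered at weight 2:
(i) `M₀ ⊆ M₂` and `M₂ ≠ V`; (ii) `N(V) ⊆ M₂`; (iii) `N(M₂) ⊆ M₀`; (iv) `N(M₀) = 0`;
(v) `N²` induces a linear isomorphism `V/M₂ ≃ M₀`. -/
theorem stmt_4 (V : Type*) [AddCommGroup V] [Module ℚ V] [FiniteDimensional ℚ V]
    (B : V →ₗ[ℚ] V →ₗ[ℚ] ℚ) (hsymm : ∀ x y : V, B x y = B y x)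
    (hnd : ∀ x : V, (∀ y : V, B x y = 0) → x = 0)
    (β ρ : V) (hββ : B β β = 0) (hβρ : B β ρ = 0)
    (hβ : β ≠ 0) (hρρ : 0 < B ρ ρ)
    (N : V →ₗ[ℚ] V) (hN : ∀ x : V, N x = B x β • ρ - B x ρ • β)
    (M0 M2 : Submodule ℚ V)
    (hM0 : M0 = Submodule.span ℚ ({β} : Set V))
    (hM2 : ∀ x : V, x ∈ M2 ↔ B x β = 0) :
    (M0 ≤ M2 ∧ M2 ≠ ⊤) ∧
    (LinearMap.range N ≤ M2) ∧
    (∀ x ∈ M2, N x ∈ M0) ∧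
    (∀ x ∈ M0, N x = 0) ∧
    (∃ f : (V ⧸ M2) →ₗ[ℚ] M0, Function.Bijective f ∧
      ∀ x : V, (f (Submodule.Quotient.mk x) : V) = N (N x)) := by
  have hρβ : B ρ β = 0 := by rw [hsymm]; exact hβρ
  -- a vector not orthogonal to β
  obtain ⟨y, hy⟩ : ∃ y, B y β ≠ 0 := by
    by_contra h
    push_neg at h
    exact hβ (hnd β fun z => by rw [hsymm]; exact h z)
  have hρρ' : B ρ ρ ≠ 0 := ne_of_gt hρρ
  have hNN : ∀ x, N (N x) = (-(B x β * B ρ ρ)) • β := by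
    intro x
    rw [hN (N x), hN x]
    simp only [map_sub, map_smul, LinearMap.sub_apply, LinearMap.smul_apply,
      smul_eq_mul, hββ, hβρ, hρβ]
    module
  have hβM0 : β ∈ M0 := by rw [hM0]; exact Submodule.mem_span_singleton_self β
  have hNNmem : ∀ x, N (N x) ∈ M0 := fun x => by
    rw [hNN]; exact Submodule.smul_mem _ _ hβM0
  refine ⟨⟨?_, ?_⟩, ?_, ?_, ?_, ?_⟩
  · -- M0 ≤ M2
    rw [hM0]
    rw [Submodule.span_singleton_le_iff_mem]
    rw [hM2]; exact hββ
  · -- M2 ≠ ⊤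
    intro h
    exact hy ((hM2 y).1 (h ▸ Submodule.mem_top))
  · -- range N ≤ M2
    rintro _ ⟨x, rfl⟩
    rw [hM2, hN]
    simp [hββ, hρβ]
  · -- N(M2) ⊆ M0
    intro x hx
    rw [hM2] at hx
    rw [hN, hx, zero_smul, zero_sub]
    exact Submodule.neg_mem _ (Submodule.smul_mem _ _ hβM0)
  · -- N(M0) = 0
    intro x hx
    rw [hM0, Submodule.mem_span_singleton] at hx
    obtain ⟨c, rfl⟩ := hx
    rw [map_smul, hN]
    simp [hββ, hβρ]
  · -- the isomorphism
    set g : V →ₗ[ℚ] M0 := LinearMap.codRestrict M0 (N ∘ₗ N) hNNmem with hg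
    have hker : M2 ≤ LinearMap.ker g := by
      intro x hx
      rw [hM2] at hx
      simp only [LinearMap.mem_ker]
      apply Subtype.ext
      simp [hg, LinearMap.codRestrict_apply, hNN, hx]
    refine ⟨Submodule.liftQ M2 g hker, ⟨?_, ?_⟩, fun x => rfl⟩
    · -- injective
      rw [← LinearMap.ker_eq_bot, Submodule.ker_liftQ]
      rw [eq_bot_iff]
      intro q hq
      obtain ⟨x, hxq⟩ := Submodule.mkQ_surjective M2 q
      rw [Submodule.mem_map] at hq
      obtain ⟨z, hz, hzq⟩ := hq
      rw [LinearMap.mem_ker] at hz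
      have : N (N z) = 0 := congrArg Subtype.val hz
      rw [hNN] at this
      have hc : -(B z β * B ρ ρ) = 0 := by
        by_contra hc
        exact hβ ((smul_eq_zero.mp this).resolve_left hc)
      have hzβ : B z β = 0 := by
        have := neg_eq_zero.mp hc
        exact (mul_eq_zero.mp this).resolve_right hρρ'
      rw [Submodule.mem_bot, ← hzq]
      simpa [Submodule.Quotient.mk_eq_zero, hM2] using hzβ
    · -- surjective
      rintro ⟨z, hz⟩
      rw [hM0, Submodule.mem_span_singleton] at hz
      obtain ⟨c, rfl⟩ := hz
      refine ⟨Submodule.Quotient.mk ((-(c / (B y β * B ρ ρ))) • y), ?_⟩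
      apply Subtype.ext
      show (N (N _) : V) = c • β
      rw [hNN]
      simp only [map_smul, LinearMap.smul_apply, smul_eq_mul]
      congr 1
      field_simp
end

section
/- A matrix A ∈ SL₂(ℤ) is conjugate in SL₂(ℤ) to R_{1,0} = [[1,1],[0,1]] if and only if there exist coprime integers s and t such that A = R_{s,t} = [[1 − st, s²], [−t², 1 + st]]. -/
def R (s t : ℤ) : Matrix.SpecialLinearGroup (Fin 2) ℤ :=
  ⟨!![1 - s * t, s ^ 2; -t ^ 2, 1 + s * t], by
    simp [Matrix.det_fin_two_of]; ring⟩

/-! Conjugating `R 1 0` by `g ∈ SL₂(ℤ)` gives `R a c`, where `(a, c)` is the first column of `g`;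
and the first columns of matrices in `SL₂` are exactly the coprime pairs. -/

open scoped MatrixGroups

namespace Matrix.SpecialLinearGroup

variable {K : Type*} [CommRing K]

lemma det_fin_two_eq_one (g : SL(2, K)) : g 0 0 * g 1 1 - g 0 1 * g 1 0 = 1 :=
  (det_fin_two (g : Matrix (Fin 2) (Fin 2) K)).symm.trans g.det_coe

lemma isCoprime_col_zero (g : SL(2, K)) : IsCoprime (g 0 0) (g 1 0) :=
  ⟨g 1 1, -g 0 1, by linear_combination det_fin_two_eq_one g⟩

lemma exists_col_zero_eq_of_isCoprime {s t : K} (h : IsCoprime s t) :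
    ∃ g : SL(2, K), g 0 0 = s ∧ g 1 0 = t := by
  obtain ⟨u, v, huv⟩ := h
  exact ⟨⟨!![s, -v; t, u], by rw [det_fin_two_of]; linear_combination huv⟩, rfl, rfl⟩

lemma mul_R_one_zero_mul_inv (g : SL(2, ℤ)) : g * R 1 0 * g⁻¹ = R (g 0 0) (g 1 0) := by
  ext i j
  rw [coe_mul, coe_mul, coe_inv]
  fin_cases i <;> fin_cases j <;>
    simp [R, adjugate_fin_two, mul_apply, Fin.sum_univ_two] <;>
    first | ring1 | linear_combination det_fin_two_eq_one g

end Matrix.SpecialLinearGroup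

open Matrix.SpecialLinearGroup in
/-- `A ∈ SL₂(ℤ)` is conjugate in `SL₂(ℤ)` to `R 1 0 = [[1,1],[0,1]]` if and only if
`A = R s t` for some coprime integers `s, t`. -/
theorem stmt_11 (A : Matrix.SpecialLinearGroup (Fin 2) ℤ) :
    IsConj (R 1 0) A ↔ ∃ s t : ℤ, IsCoprime s t ∧ A = R s t := by
  rw [isConj_iff]
  constructor
  · rintro ⟨g, rfl⟩
    exact ⟨g 0 0, g 1 0, isCoprime_col_zero g, mul_R_one_zero_mul_inv g⟩
  · rintro ⟨s, t, hst, rfl⟩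
    obtain ⟨g, rfl, rfl⟩ := exists_col_zero_eq_of_isCoprime hst
    exact ⟨g, mul_R_one_zero_mul_inv g⟩
end

section
/- The matrix R_{1,0}⁻¹ = [[1,−1],[0,1]] can be written as a product of matrices each of which is conjugate in SL₂(ℤ) to R_{1,0} = [[1,1],[0,1]]; that is, R_{1,0}⁻¹ lies in the submonoid of SL₂(ℤ) generated by the conjugacy class of R_{1,0}. -/
theorem Submonoid.inv_mem_of_mul_pow_eq_one {G : Type*} [Group G] {M : Submonoid G} {a b : G}
    (ha : a ∈ M) (hb : b ∈ M) {n : ℕ} (h : (a * b) ^ (n + 1) = 1) : a⁻¹ ∈ M := by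
  have : a⁻¹ = b * (a * b) ^ n :=
    (eq_inv_of_mul_eq_one_right (by rw [← mul_assoc, ← pow_succ', h])).symm
  rw [this]
  exact mul_mem hb (pow_mem (mul_mem ha hb) n)

theorem isConj_R_one_zero_R_zero_one : IsConj (R 1 0) (R 0 1) :=
  isConj_iff.2 ⟨ModularGroup.S, by decide⟩

theorem R_one_zero_mul_R_zero_one_pow_six : (R 1 0 * R 0 1) ^ 6 = 1 := by
  decide

/-- `(R 1 0)⁻¹ = [[1,-1],[0,1]]` lies in the submonoid of `SL₂(ℤ)` generated by the
conjugacy class of `R 1 0 = [[1,1],[0,1]]`, i.e. it is a product of conjugates of `R 1 0`. -/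
theorem stmt_13 :
    (R 1 0)⁻¹ ∈ Submonoid.closure
      {A : Matrix.SpecialLinearGroup (Fin 2) ℤ | IsConj (R 1 0) A} :=
  Submonoid.inv_mem_of_mul_pow_eq_one (Submonoid.subset_closure (IsConj.refl _))
    (Submonoid.subset_closure isConj_R_one_zero_R_zero_one) R_one_zero_mul_R_zero_one_pow_six
end

section
/- If T ∈ SL₂(ℤ) is a product of matrices each conjugate in SL₂(ℤ) to R_{1,0} = [[1,1],[0,1]], then there exist matrices S₁, …, S_b, each conjugate in SL₂(ℤ) to R_{1,0}, such that T · S₁ · ⋯ · S_b equals the identity matrix. Equivalently, the submonoid of SL₂(ℤ) generated by the conjugacy class of R_{1,0} is closed under taking inverses. -/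
/-!
With `a = R 1 0` and its conjugate `b = R 0 1` (by the rotation `[[0,-1],[1,0]]`), the product
`a * b = [[0,1],[-1,1]]` has order `6`, so `a⁻¹ = b * (a * b) ^ 5` is a product of conjugates of `a`.
Conjugating this identity shows that every conjugate of `a` has its inverse in the submonoid
generated by the conjugacy class, and the inverse of a product is the reversed product of inverses.
-/

section ConjugacyClassClosure

variable {G : Type*} [Group G]

theorem conj_mem_closure_conjugatesOf {g x : G} (c : G)
    (hx : x ∈ Submonoid.closure (conjugatesOf g)) :
    c * x * c⁻¹ ∈ Submonoid.closure (conjugatesOf g) := by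
  induction hx using Submonoid.closure_induction with
  | mem y hy =>
    exact Submonoid.subset_closure (hy.trans (isConj_iff.mpr ⟨c, rfl⟩))
  | one => simp
  | mul y z _ _ hy hz =>
    have hsplit : c * (y * z) * c⁻¹ = (c * y * c⁻¹) * (c * z * c⁻¹) := by group
    rw [hsplit]
    exact mul_mem hy hz

theorem inv_mem_closure_conjugatesOf {g x : G}
    (hg : g⁻¹ ∈ Submonoid.closure (conjugatesOf g))
    (hx : x ∈ Submonoid.closure (conjugatesOf g)) :
    x⁻¹ ∈ Submonoid.closure (conjugatesOf g) := by
  induction hx using Submonoid.closure_induction with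
  | mem y hy =>
    obtain ⟨c, rfl⟩ := isConj_iff.mp hy
    simpa only [mul_inv_rev, inv_inv, mul_assoc] using conj_mem_closure_conjugatesOf c hg
  | one => simp
  | mul y z _ _ hy hz =>
    rw [mul_inv_rev]
    exact mul_mem hz hy

end ConjugacyClassClosure

theorem R_one_zero_inv_eq : (R 1 0)⁻¹ = R 0 1 * (R 1 0 * R 0 1) ^ 5 :=
  inv_eq_of_mul_eq_one_right <| by
    rw [← mul_assoc, ← pow_succ', R_one_zero_mul_R_zero_one_pow_six]

theorem R_one_zero_inv_mem_closure :
    (R 1 0)⁻¹ ∈ Submonoid.closure (conjugatesOf (R 1 0)) := by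
  have hb : R 0 1 ∈ Submonoid.closure (conjugatesOf (R 1 0)) :=
    Submonoid.subset_closure isConj_R_one_zero_R_zero_one
  have ha : R 1 0 ∈ Submonoid.closure (conjugatesOf (R 1 0)) :=
    Submonoid.subset_closure (IsConj.refl _)
  rw [R_one_zero_inv_eq]
  exact mul_mem hb (pow_mem (mul_mem ha hb) 5)

/-- If `T ∈ SL₂(ℤ)` is a product of conjugates of `R 1 0 = [[1,1],[0,1]]`, then there are
matrices `S₁, …, S_b`, each conjugate to `R 1 0`, with `T * S₁ * ⋯ * S_b = 1`. -/
theorem stmt_14 (T : Matrix.SpecialLinearGroup (Fin 2) ℤ)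
    (hT : T ∈ Submonoid.closure
      {A : Matrix.SpecialLinearGroup (Fin 2) ℤ | IsConj (R 1 0) A}) :
    ∃ L : List (Matrix.SpecialLinearGroup (Fin 2) ℤ),
      (∀ S ∈ L, IsConj (R 1 0) S) ∧ T * L.prod = 1 := by
  obtain ⟨L, hL, hprod⟩ := Submonoid.exists_list_of_mem_closure
    (inv_mem_closure_conjugatesOf R_one_zero_inv_mem_closure hT)
  exact ⟨L, hL, by rw [hprod, mul_inv_cancel]⟩
end
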